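/- In the one-dimensional no-intercept model, the set of parameters β = (∫ x² f(x) dx)⁻¹ · ∫ x f(x) g(x) dx obtained as g ranges over measurable functions with values in [0,1] is exactly the closed interval [(∫ x² f)⁻¹ ∫ min(x,0) f, (∫ x² f)⁻¹ ∫ max(x,0) f] (an interval of ℝ), provided ∫ x² f(x) dx > 0. -/
import Mathlib


open MeasureTheory

/-- In the 1D no-intercept model, the set of parameters
`β = (∫x²f)⁻¹ ∫ x f(x) g(x) dx`, as `g` ranges over measurable functions valued in
`[0,1]`, is exactly the interval `[(∫x²f)⁻¹ ∫ min(x,0) f, (∫x²f)⁻¹ ∫ max(x,0) f]`. -/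
theorem icls_1d_constrained_interval (f : ℝ → ℝ)
    (hf_meas : Measurable f) (hf_nonneg : ∀ x, 0 ≤ f x)
    (hf_prob : ∫ x, f x = 1)
    (hint_x2 : Integrable (fun x => x ^ 2 * f x))
    (hint_x : Integrable (fun x => x * f x))
    (hm2 : 0 < ∫ x, x ^ 2 * f x) :
    {β : ℝ | ∃ g : ℝ → ℝ, Measurable g ∧ (∀ x, g x ∈ Set.Icc (0 : ℝ) 1) ∧
        β = (∫ x, x ^ 2 * f x)⁻¹ * ∫ x, x * f x * g x} =
      Set.Icc ((∫ x, x ^ 2 * f x)⁻¹ * ∫ x, min x 0 * f x)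
        ((∫ x, x ^ 2 * f x)⁻¹ * ∫ x, max x 0 * f x) := by
  have habs : Integrable (fun x => |x * f x|) := hint_x.abs
  have hmax : Integrable (fun x => max x 0 * f x) := by
    have : (fun x => max x 0 * f x) = fun x => (x * f x + |x * f x|) / 2 := by
      funext x
      have : |x * f x| = |x| * f x := by
        rw [abs_mul, abs_of_nonneg (hf_nonneg x)]
      rw [this]
      rcases le_or_gt 0 x with h | h
      · rw [max_eq_left h, abs_of_nonneg h]; ring
      · rw [max_eq_right h.le, abs_of_neg h]; ring
    rw [this]
    exact (hint_x.add habs).div_const 2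
  have hmin : Integrable (fun x => min x 0 * f x) := by
    have : (fun x => min x 0 * f x) = fun x => (x * f x - |x * f x|) / 2 := by
      funext x
      have : |x * f x| = |x| * f x := by
        rw [abs_mul, abs_of_nonneg (hf_nonneg x)]
      rw [this]
      rcases le_or_gt 0 x with h | h
      · rw [min_eq_right h, abs_of_nonneg h]; ring
      · rw [min_eq_left h.le, abs_of_neg h]; ring
    rw [this]
    exact (hint_x.sub habs).div_const 2
  have hcinv : (0:ℝ) < (∫ x, x ^ 2 * f x)⁻¹ := inv_pos.mpr hm2
  ext β
  simp only [Set.mem_setOf_eq, Set.mem_Icc]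
  constructor
  · rintro ⟨g, hg_meas, hg_mem, rfl⟩
    have hfg : Integrable (fun x => x * f x * g x) := by
      refine hint_x.mono ((measurable_id.mul hf_meas).mul hg_meas).aestronglyMeasurable
        (Filter.Eventually.of_forall fun x => ?_)
      simp only [Real.norm_eq_abs, abs_mul]
      have h1 := (hg_mem x).1
      have h2 := (hg_mem x).2
      have : |g x| ≤ 1 := abs_le.mpr ⟨by linarith, h2⟩
      exact mul_le_of_le_one_right (mul_nonneg (abs_nonneg x) (abs_nonneg (f x))) this
    have hlo : ∀ x, min x 0 * f x ≤ x * f x * g x := by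
      intro x
      have h1 := (hg_mem x).1
      have h2 := (hg_mem x).2
      have hf := hf_nonneg x
      rcases le_or_gt 0 x with h | h
      · rw [min_eq_right h]
        nlinarith [mul_nonneg (mul_nonneg h hf) h1]
      · rw [min_eq_left h.le]
        nlinarith [mul_nonneg (mul_nonneg (neg_nonneg.mpr h.le) hf) (sub_nonneg.mpr h2)]
    have hhi : ∀ x, x * f x * g x ≤ max x 0 * f x := by
      intro x
      have h1 := (hg_mem x).1
      have h2 := (hg_mem x).2
      have hf := hf_nonneg x
      rcases le_or_gt 0 x with h | h
      · rw [max_eq_left h]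
        nlinarith [mul_nonneg (mul_nonneg h hf) (sub_nonneg.mpr h2)]
      · rw [max_eq_right h.le]
        nlinarith [mul_nonneg (mul_nonneg (neg_nonneg.mpr h.le) hf) h1]
    constructor
    · exact mul_le_mul_of_nonneg_left (integral_mono hmin hfg hlo) hcinv.le
    · exact mul_le_mul_of_nonneg_left (integral_mono hfg hmax hhi) hcinv.le
  · rintro ⟨h1, h2⟩
    set c := (∫ x, x ^ 2 * f x)⁻¹ with hc
    set m := ∫ x, min x 0 * f x with hmdef
    set M := ∫ x, max x 0 * f x with hMdef
    have hv : β = c * ((β / c - m) / (M - m) * (M - m) + m) := by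
      rcases eq_or_ne M m with hMm | hMm
      · have hβ : β = c * m := le_antisymm (hMm ▸ h2) h1
        rw [hMm]
        simp [hβ]
      · have hne : M - m ≠ 0 := sub_ne_zero.mpr hMm
        field_simp
        ring
    set t := (β / c - m) / (M - m) with ht
    have hmM : m ≤ M := by
      have := le_trans h1 h2
      exact le_of_mul_le_mul_left this hcinv
    have ht01 : 0 ≤ t ∧ t ≤ 1 := by
      rcases eq_or_lt_of_le hmM with hMm | hMm
      · constructor <;> simp [ht, ← hMm]
      · have hβc : m ≤ β / c ∧ β / c ≤ M := by
          constructor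
          · rw [le_div_iff₀ hcinv, mul_comm]; exact h1
          · rw [div_le_iff₀ hcinv, mul_comm]; exact h2
        constructor
        · exact div_nonneg (by linarith [hβc.1]) (by linarith)
        · rw [div_le_one (by linarith)]; linarith [hβc.2]
    refine ⟨fun x => if 0 < x then t else 1 - t, ?_, ?_, ?_⟩
    · exact Measurable.ite measurableSet_Ioi measurable_const measurable_const
    · intro x
      rcases lt_or_ge 0 x with h | h
      · simp only [if_pos h, Set.mem_Icc]; exact ht01
      · simp only [if_neg (not_lt.mpr h), Set.mem_Icc]
        constructor <;> linarith [ht01.1, ht01.2]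
    · have heq : (fun x => x * f x * (if 0 < x then t else 1 - t)) =
          fun x => t * (max x 0 * f x) + (1 - t) * (min x 0 * f x) := by
        funext x
        rcases lt_or_ge 0 x with h | h
        · rw [if_pos h, max_eq_left h.le, min_eq_right h.le]; ring
        · rw [if_neg (not_lt.mpr h), max_eq_right h, min_eq_left h]; ring
      rw [heq, integral_add (hmax.const_mul t) (hmin.const_mul (1 - t)),
        integral_const_mul, integral_const_mul, ← hmdef, ← hMdef]
      rw [hv]
      ring
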